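/- Let n be a positive integer, α, β ∈ (0,1) and μ̄ ∈ (0,1). Let P_X^{⊗n} (resp. P_Y^{⊗n}) be the n-fold product of the Bernoulli distribution on {0,1} with success probability α (resp. β), and let P̃_{X^n} (resp. P̃_{Y^n}) be its conditioning on the event that the number of 1s is at least (1−μ̄)·n·α (resp. at least (1−μ̄)·n·β). Then (1/2)·∑_{x^n, y^n ∈ {0,1}^n} |P̃_{X^n}(x^n)·P̃_{Y^n}(y^n) − P_X^{⊗n}(x^n)·P_Y^{⊗n}(y^n)| ≤ 2·exp(−μ̄²·n·α/2) + 2·exp(−μ̄²·n·β/2). -/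

import Mathlib

lemma auxderiv (u : ℝ) (hu0 : 0 < u) :
    HasDerivAt (fun u : ℝ => u * Real.log u - (u^2-1)/2) (Real.log u + 1 - u) u := by
  have h1 : HasDerivAt (fun u : ℝ => u * Real.log u) (1 * Real.log u + u * u⁻¹) u :=
    (hasDerivAt_id u).mul (Real.hasDerivAt_log (ne_of_gt hu0))
  have h2 : HasDerivAt (fun u : ℝ => (u^2 - 1)/2) u u := by
    have := ((hasDerivAt_pow 2 u).sub_const 1).div_const 2
    simpa using this
  have := h1.sub h2
  have hu : u * u⁻¹ = 1 := mul_inv_cancel₀ (ne_of_gt hu0)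
  refine this.congr_deriv ?_
  rw [one_mul, hu]

lemma aux1 (x : ℝ) (hx : 0 < x) (hx1 : x ≤ 1) : (x^2 - 1)/2 ≤ x * Real.log x := by
  have hcont : Continuous (fun u : ℝ => u * Real.log u - (u^2 - 1)/2) :=
    Real.continuous_mul_log.sub (by continuity)
  have key : AntitoneOn (fun u : ℝ => u * Real.log u - (u^2-1)/2) (Set.Icc x 1) := by
    apply antitoneOn_of_deriv_nonpos (convex_Icc x 1) hcont.continuousOn
    · intro u hu
      rw [interior_Icc] at hu
      exact (auxderiv u (lt_trans hx hu.1)).differentiableAt.differentiableWithinAt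
    · intro u hu
      rw [interior_Icc] at hu
      have hu0 : 0 < u := lt_trans hx hu.1
      rw [(auxderiv u hu0).deriv]
      have := Real.log_le_sub_one_of_pos hu0
      linarith
  have h := key (Set.mem_Icc.2 ⟨le_refl x, hx1⟩) (Set.mem_Icc.2 ⟨hx1, le_refl 1⟩) hx1
  simp [Real.log_one] at h
  linarith

lemma aux2 (μ : ℝ) (hμ : 0 < μ) (hμ1 : μ < 1) : μ^2/2 ≤ μ + (1-μ)*Real.log (1-μ) := by
  have := aux1 (1-μ) (by linarith) (by linarith)
  nlinarith [this]


lemma chernoff (n : ℕ) (α μ : ℝ) (hα : 0 < α) (hα1 : α < 1) (hμ : 0 < μ) (hμ1 : μ < 1) :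
    ∑ x : Fin n → Bool, (∏ i, (if x i then α else 1-α)) *
      (if (1-μ)*n*α ≤ ∑ i, (if x i then (1:ℝ) else 0) then 0 else 1)
      ≤ Real.exp (-(μ^2*n*α)/2) := by
  set t : ℝ := -Real.log (1-μ) with ht_def
  have h1μ : 0 < 1 - μ := by linarith
  have het : Real.exp (-t) = 1 - μ := by rw [ht_def, neg_neg, Real.exp_log h1μ]
  have ht : 0 < t := by
    have := Real.log_neg h1μ (by linarith)
    rw [ht_def]; linarith
  set c : ℝ := (1-μ)*n*α with hc_def
  set S : (Fin n → Bool) → ℝ := fun x => ∑ i, (if x i then (1:ℝ) else 0) with hS_def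
  have hprodnn : ∀ x : Fin n → Bool, (0:ℝ) ≤ ∏ i, (if x i then α else 1-α) := by
    intro x
    apply Finset.prod_nonneg
    intro i _
    split <;> linarith
  calc ∑ x : Fin n → Bool, (∏ i, (if x i then α else 1-α)) *
      (if c ≤ S x then (0:ℝ) else 1)
      ≤ ∑ x : Fin n → Bool, (∏ i, (if x i then α else 1-α)) * Real.exp (t * (c - S x)) := by
        apply Finset.sum_le_sum
        intro x _
        apply mul_le_mul_of_nonneg_left _ (hprodnn x)
        by_cases h : c ≤ S x
        · simp only [h, if_true]
          positivity
        · simp only [h, if_false]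
          apply Real.one_le_exp
          push_neg at h
          nlinarith
    _ = Real.exp (t*c) * ∑ x : Fin n → Bool,
        ∏ i, ((if x i then α else 1-α) * Real.exp (-t * (if x i then (1:ℝ) else 0))) := by
        rw [Finset.mul_sum]
        apply Finset.sum_congr rfl
        intro x _
        have h1 : t * (c - S x) = t*c + ∑ i, (-t) * (if x i then (1:ℝ) else 0) := by
          rw [← Finset.mul_sum, hS_def]
          ring
        rw [h1, Real.exp_add, Real.exp_sum, Finset.prod_mul_distrib]
        ring
    _ = Real.exp (t*c) * (1 - α*μ)^n := by
        congr 1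
        have h2 := Finset.prod_univ_sum (fun _ : Fin n => (Finset.univ : Finset Bool))
          (fun _ b => (if b then α else 1-α) * Real.exp (-t * (if b then (1:ℝ) else 0)))
        rw [Fintype.piFinset_univ] at h2
        rw [← h2]
        have h3 : ∀ i : Fin n, ∑ b : Bool,
            (if b then α else 1-α) * Real.exp (-t * (if b then (1:ℝ) else 0)) = 1 - α*μ := by
          intro i
          have hb : ∑ b : Bool, (if b then α else 1-α) * Real.exp (-t * (if b then (1:ℝ) else 0))
              = α * Real.exp (-t) + (1-α) := by
            rw [Fintype.sum_bool]
            norm_num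
          rw [hb, het]
          ring
        rw [Finset.prod_congr rfl (fun i _ => h3 i), Finset.prod_const, Finset.card_univ,
          Fintype.card_fin]
    _ ≤ Real.exp (t*c) * Real.exp (-(α*μ) * n) := by
        apply mul_le_mul_of_nonneg_left _ (le_of_lt (Real.exp_pos _))
        have h1 : (0:ℝ) ≤ 1 - α*μ := by nlinarith
        have h2 : 1 - α*μ ≤ Real.exp (-(α*μ)) := by
          have := Real.add_one_le_exp (-(α*μ))
          linarith
        calc (1 - α*μ)^n ≤ (Real.exp (-(α*μ)))^n := pow_le_pow_left₀ h1 h2 n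
          _ = Real.exp (-(α*μ) * n) := by rw [← Real.exp_nat_mul]; ring_nf
    _ ≤ Real.exp (-(μ^2*n*α)/2) := by
        rw [← Real.exp_add]
        apply Real.exp_le_exp.mpr
        have key := aux2 μ hμ hμ1
        have hnα : (0:ℝ) ≤ (n:ℝ)*α := by positivity
        have h4 := mul_le_mul_of_nonneg_left key hnα
        rw [hc_def, ht_def]
        nlinarith [h4]


/-- two-sender typical truncation lemma, classical statement of
Lemma 4 of the paper. Let `P` (resp. `Q`) be the `n`-fold Bernoulli(α)
(resp. Bernoulli(β)) product on `{0,1}^n`, and let `Pt` (resp. `Qt`) be its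
conditioning on the event that the number of ones is at least `(1-μ)·n·α`
(resp. `(1-μ)·n·β`). Then the total variation distance between the product
`Pt ⊗ Qt` and `P ⊗ Q` is at most `2·exp(-μ²·n·α/2) + 2·exp(-μ²·n·β/2)`. -/
theorem stmt_1 (n : ℕ) (hn : 0 < n) (α β μ : ℝ)
    (hα : 0 < α) (hα1 : α < 1) (hβ : 0 < β) (hβ1 : β < 1)
    (hμ : 0 < μ) (hμ1 : μ < 1)
    (P Q : (Fin n → Bool) → ℝ)
    (hP : ∀ x, P x = ∏ i, (if x i then α else 1 - α))
    (hQ : ∀ y, Q y = ∏ i, (if y i then β else 1 - β))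
    (indX indY : (Fin n → Bool) → ℝ)
    (hindX : ∀ x, indX x =
      if (1 - μ) * n * α ≤ ∑ i, (if x i then (1 : ℝ) else 0) then 1 else 0)
    (hindY : ∀ y, indY y =
      if (1 - μ) * n * β ≤ ∑ i, (if y i then (1 : ℝ) else 0) then 1 else 0)
    (PE QE : ℝ) (hPE : PE = ∑ x, P x * indX x) (hQE : QE = ∑ y, Q y * indY y)
    (Pt Qt : (Fin n → Bool) → ℝ)
    (hPt : ∀ x, Pt x = P x * indX x / PE)
    (hQt : ∀ y, Qt y = Q y * indY y / QE) :
    (1 / 2) * ∑ x, ∑ y, |Pt x * Qt y - P x * Q y| ≤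
      2 * Real.exp (-(μ ^ 2 * n * α) / 2) + 2 * Real.exp (-(μ ^ 2 * n * β) / 2) := by
  -- nonnegativity of P and Q
  have hPnn : ∀ x, 0 ≤ P x := by
    intro x; rw [hP]
    apply Finset.prod_nonneg
    intro i _; split <;> linarith
  have hQnn : ∀ y, 0 ≤ Q y := by
    intro y; rw [hQ]
    apply Finset.prod_nonneg
    intro i _; split <;> linarith
  -- P and Q are probability distributions
  have hPsum : ∑ x, P x = 1 := by
    have h2 := Finset.prod_univ_sum (fun _ : Fin n => (Finset.univ : Finset Bool))
      (fun _ b => if b then α else 1 - α)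
    rw [Fintype.piFinset_univ] at h2
    calc ∑ x, P x = ∑ x : Fin n → Bool, ∏ i, (if x i then α else 1 - α) :=
          Finset.sum_congr rfl (fun x _ => hP x)
      _ = ∏ _i : Fin n, ∑ b : Bool, (if b then α else 1 - α) := h2.symm
      _ = 1 := by
          have : ∀ _i : Fin n, ∑ b : Bool, (if b then α else 1 - α) = 1 := by
            intro i; rw [Fintype.sum_bool]; norm_num
          rw [Finset.prod_congr rfl (fun i _ => this i)]
          simp
  have hQsum : ∑ y, Q y = 1 := by
    have h2 := Finset.prod_univ_sum (fun _ : Fin n => (Finset.univ : Finset Bool))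
      (fun _ b => if b then β else 1 - β)
    rw [Fintype.piFinset_univ] at h2
    calc ∑ y, Q y = ∑ y : Fin n → Bool, ∏ i, (if y i then β else 1 - β) :=
          Finset.sum_congr rfl (fun y _ => hQ y)
      _ = ∏ _i : Fin n, ∑ b : Bool, (if b then β else 1 - β) := h2.symm
      _ = 1 := by
          have : ∀ _i : Fin n, ∑ b : Bool, (if b then β else 1 - β) = 1 := by
            intro i; rw [Fintype.sum_bool]; norm_num
          rw [Finset.prod_congr rfl (fun i _ => this i)]
          simp
  -- indicator facts
  have hindX01 : ∀ x, indX x = 0 ∨ indX x = 1 := by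
    intro x; rw [hindX]; split
    · right; rfl
    · left; rfl
  have hindY01 : ∀ y, indY y = 0 ∨ indY y = 1 := by
    intro y; rw [hindY]; split
    · right; rfl
    · left; rfl
  have hindXnn : ∀ x, 0 ≤ indX x := by
    intro x; rcases hindX01 x with h | h <;> rw [h] <;> norm_num
  have hindYnn : ∀ y, 0 ≤ indY y := by
    intro y; rcases hindY01 y with h | h <;> rw [h] <;> norm_num
  have hindX1 : ∀ x, indX x ≤ 1 := by
    intro x; rcases hindX01 x with h | h <;> rw [h] <;> norm_num
  have hindY1 : ∀ y, indY y ≤ 1 := by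
    intro y; rcases hindY01 y with h | h <;> rw [h] <;> norm_num
  -- PE, QE bounds
  have hPE1 : PE ≤ 1 := by
    rw [hPE, ← hPsum]
    apply Finset.sum_le_sum
    intro x _
    nlinarith [hPnn x, hindX1 x]
  have hQE1 : QE ≤ 1 := by
    rw [hQE, ← hQsum]
    apply Finset.sum_le_sum
    intro y _
    nlinarith [hQnn y, hindY1 y]
  have hPEpos : 0 < PE := by
    have hx0 : indX (fun _ => true) = 1 := by
      rw [hindX]
      rw [if_pos]
      have h1 : ∑ i : Fin n, (if (fun _ : Fin n => true) i then (1:ℝ) else 0) = n := by simp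
      rw [h1]
      have h2 : (1-μ)*α ≤ 1 := by nlinarith
      have h3 := mul_le_mul_of_nonneg_left h2 (Nat.cast_nonneg (α := ℝ) n)
      calc (1-μ)*(n:ℝ)*α = (n:ℝ)*((1-μ)*α) := by ring
        _ ≤ (n:ℝ)*1 := h3
        _ = (n:ℝ) := mul_one _
    have hPx0 : 0 < P (fun _ => true) := by
      rw [hP]
      simp only [if_true]
      apply Finset.prod_pos
      intro i _; exact hα
    have hsle := Finset.single_le_sum (f := fun x => P x * indX x)
      (fun x _ => mul_nonneg (hPnn x) (hindXnn x)) (Finset.mem_univ (fun _ : Fin n => true))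
    have hsle' : P (fun _ => true) * indX (fun _ => true) ≤ ∑ x, P x * indX x := hsle
    rw [hPE]
    have : (0:ℝ) < P (fun _ => true) * indX (fun _ => true) := by
      rw [hx0]; linarith
    linarith [hsle']
  have hQEpos : 0 < QE := by
    have hy0 : indY (fun _ => true) = 1 := by
      rw [hindY]
      rw [if_pos]
      have h1 : ∑ i : Fin n, (if (fun _ : Fin n => true) i then (1:ℝ) else 0) = n := by simp
      rw [h1]
      have h2 : (1-μ)*β ≤ 1 := by nlinarith
      have h3 := mul_le_mul_of_nonneg_left h2 (Nat.cast_nonneg (α := ℝ) n)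
      calc (1-μ)*(n:ℝ)*β = (n:ℝ)*((1-μ)*β) := by ring
        _ ≤ (n:ℝ)*1 := h3
        _ = (n:ℝ) := mul_one _
    have hQy0 : 0 < Q (fun _ => true) := by
      rw [hQ]
      simp only [if_true]
      apply Finset.prod_pos
      intro i _; exact hβ
    have hsle := Finset.single_le_sum (f := fun y => Q y * indY y)
      (fun y _ => mul_nonneg (hQnn y) (hindYnn y)) (Finset.mem_univ (fun _ : Fin n => true))
    have hsle' : Q (fun _ => true) * indY (fun _ => true) ≤ ∑ y, Q y * indY y := hsle
    rw [hQE]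
    have : (0:ℝ) < Q (fun _ => true) * indY (fun _ => true) := by
      rw [hy0]; linarith
    linarith [hsle']
  -- Chernoff bounds
  have h1PE : 1 - PE ≤ Real.exp (-(μ^2*n*α)/2) := by
    have hch := chernoff n α μ hα hα1 hμ hμ1
    have heq : 1 - PE = ∑ x : Fin n → Bool, (∏ i, (if x i then α else 1-α)) *
        (if (1-μ)*n*α ≤ ∑ i, (if x i then (1:ℝ) else 0) then 0 else 1) := by
      have hptw : ∀ x : Fin n → Bool, (∏ i, (if x i then α else 1-α)) *
          (if (1-μ)*n*α ≤ ∑ i, (if x i then (1:ℝ) else 0) then 0 else 1)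
          = P x - P x * indX x := by
        intro x
        rw [hP x, hindX x]
        split <;> ring
      rw [Finset.sum_congr rfl (fun x _ => hptw x), Finset.sum_sub_distrib, hPsum, ← hPE]
    rw [heq]
    exact hch
  have h1QE : 1 - QE ≤ Real.exp (-(μ^2*n*β)/2) := by
    have hch := chernoff n β μ hβ hβ1 hμ hμ1
    have heq : 1 - QE = ∑ y : Fin n → Bool, (∏ i, (if y i then β else 1-β)) *
        (if (1-μ)*n*β ≤ ∑ i, (if y i then (1:ℝ) else 0) then 0 else 1) := by
      have hptw : ∀ y : Fin n → Bool, (∏ i, (if y i then β else 1-β)) *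
          (if (1-μ)*n*β ≤ ∑ i, (if y i then (1:ℝ) else 0) then 0 else 1)
          = Q y - Q y * indY y := by
        intro y
        rw [hQ y, hindY y]
        split <;> ring
      rw [Finset.sum_congr rfl (fun y _ => hptw y), Finset.sum_sub_distrib, hQsum, ← hQE]
    rw [heq]
    exact hch
  -- TV of truncation
  have habsP : ∑ x, |Pt x - P x| = 2*(1-PE) := by
    have hpt : ∀ x, |Pt x - P x| = P x * indX x * (1/PE - 1) + P x * (1 - indX x) := by
      intro x
      rcases hindX01 x with h | h
      · rw [hPt, h, mul_zero, zero_div, zero_sub, abs_neg, abs_of_nonneg (hPnn x)]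
        ring
      · rw [hPt, h, mul_one]
        have h1 : 0 ≤ P x / PE - P x := by
          have h2 : P x ≤ P x / PE := by
            rw [le_div_iff₀ hPEpos]
            nlinarith [hPnn x]
          linarith
        rw [abs_of_nonneg h1]
        field_simp
        ring
    rw [Finset.sum_congr rfl (fun x _ => hpt x), Finset.sum_add_distrib, ← Finset.sum_mul]
    have h3 : ∑ x, P x * (1 - indX x) = 1 - PE := by
      have hptw : ∀ x : Fin n → Bool, P x * (1 - indX x) = P x - P x * indX x :=
        fun x => by ring
      rw [Finset.sum_congr rfl (fun x _ => hptw x), Finset.sum_sub_distrib, hPsum, ← hPE]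
    rw [h3, ← hPE]
    field_simp
    ring
  have habsQ : ∑ y, |Qt y - Q y| = 2*(1-QE) := by
    have hqt : ∀ y, |Qt y - Q y| = Q y * indY y * (1/QE - 1) + Q y * (1 - indY y) := by
      intro y
      rcases hindY01 y with h | h
      · rw [hQt, h, mul_zero, zero_div, zero_sub, abs_neg, abs_of_nonneg (hQnn y)]
        ring
      · rw [hQt, h, mul_one]
        have h1 : 0 ≤ Q y / QE - Q y := by
          have h2 : Q y ≤ Q y / QE := by
            rw [le_div_iff₀ hQEpos]
            nlinarith [hQnn y]
          linarith
        rw [abs_of_nonneg h1]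
        field_simp
        ring
    rw [Finset.sum_congr rfl (fun y _ => hqt y), Finset.sum_add_distrib, ← Finset.sum_mul]
    have h3 : ∑ y, Q y * (1 - indY y) = 1 - QE := by
      have hptw : ∀ y : Fin n → Bool, Q y * (1 - indY y) = Q y - Q y * indY y :=
        fun y => by ring
      rw [Finset.sum_congr rfl (fun y _ => hptw y), Finset.sum_sub_distrib, hQsum, ← hQE]
    rw [h3, ← hQE]
    field_simp
    ring
  -- Qt is a probability distribution
  have hQtnn : ∀ y, 0 ≤ Qt y := by
    intro y; rw [hQt]
    exact div_nonneg (mul_nonneg (hQnn y) (hindYnn y)) (le_of_lt hQEpos)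
  have hQtsum : ∑ y, Qt y = 1 := by
    rw [Finset.sum_congr rfl (fun y _ => hQt y), ← Finset.sum_div, ← hQE]
    field_simp
  -- main bound
  have hmain : ∑ x, ∑ y, |Pt x * Qt y - P x * Q y| ≤ 2*(1-PE) + 2*(1-QE) := by
    calc ∑ x, ∑ y, |Pt x * Qt y - P x * Q y|
        ≤ ∑ x, ∑ y, (|Pt x - P x| * Qt y + P x * |Qt y - Q y|) := by
          apply Finset.sum_le_sum
          intro x _
          apply Finset.sum_le_sum
          intro y _
          have h1 : Pt x * Qt y - P x * Q y = (Pt x - P x) * Qt y + P x * (Qt y - Q y) := by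
            ring
          rw [h1]
          refine (abs_add_le _ _).trans ?_
          rw [abs_mul, abs_mul, abs_of_nonneg (hQtnn y), abs_of_nonneg (hPnn x)]
      _ = (∑ x, |Pt x - P x|) * (∑ y, Qt y) + (∑ x, P x) * (∑ y, |Qt y - Q y|) := by
          rw [Finset.sum_mul, Finset.sum_mul]
          rw [← Finset.sum_add_distrib]
          apply Finset.sum_congr rfl
          intro x _
          rw [Finset.sum_add_distrib, Finset.mul_sum, Finset.mul_sum]
      _ = 2*(1-PE) + 2*(1-QE) := by
          rw [habsP, habsQ, hQtsum, hPsum]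
          ring
  have hfin : (1/2 : ℝ) * ∑ x, ∑ y, |Pt x * Qt y - P x * Q y| ≤ (1-PE) + (1-QE) := by
    linarith
  calc (1/2 : ℝ) * ∑ x, ∑ y, |Pt x * Qt y - P x * Q y| ≤ (1-PE) + (1-QE) := hfin
    _ ≤ Real.exp (-(μ^2*n*α)/2) + Real.exp (-(μ^2*n*β)/2) := add_le_add h1PE h1QE
    _ ≤ 2 * Real.exp (-(μ ^ 2 * n * α) / 2) + 2 * Real.exp (-(μ ^ 2 * n * β) / 2) := by
        nlinarith [Real.exp_pos (-(μ^2*n*α)/2), Real.exp_pos (-(μ^2*n*β)/2)]
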